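/- Let Γ = (V,R) be a graph, I a set, and N an open normal subgroup of G_Γ × C_2^I. If C_q ⊆ π_r(N) for some r ∈ R, then (C_q)_r ⊆ N. -/

import Mathlib

open Function

noncomputable section

/-- A discrete group is a topological group. -/
instance (priority := 50) discreteTopologicalGroup (G : Type*) [Group G] [TopologicalSpace G]
    [DiscreteTopology G] : IsTopologicalGroup G where
  continuous_mul := continuous_of_discreteTopology
  continuous_inv := continuous_of_discreteTopology

/-- The sign epimorphism `τ : D_p → C_2 = {±1}` killing the rotations. -/
def dihedralSign (p : ℕ) : DihedralGroup p →* ℤˣ where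
  toFun x := match x with
    | DihedralGroup.r _ => 1
    | DihedralGroup.sr _ => -1
  map_one' := rfl
  map_mul' a b := by cases a <;> cases b <;> rfl

/-- `{±1}` acts on a commutative group by exponentiation (i.e. `-1` acts by inversion). -/
def unitsIntAut (A : Type*) [CommGroup A] : ℤˣ →* MulAut A where
  toFun u :=
    { toFun := fun x => x ^ (u : ℤ)
      invFun := fun x => x ^ (u : ℤ)
      left_inv := fun x => by rcases Int.units_eq_one_or u with h | h <;> simp [h]
      right_inv := fun x => by rcases Int.units_eq_one_or u with h | h <;> simp [h]
      map_mul' := fun x y => mul_zpow x y _ }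
  map_one' := by ext x; simp
  map_mul' u v := by
    ext x
    rcases Int.units_eq_one_or u with h | h <;>
      rcases Int.units_eq_one_or v with h' | h' <;>
        simp [h, h']

/-- The action of `D_p × D_p` on `C_q` given by `(x,y) · g = g^(τ(x)τ(y))`. -/
def Wact (p q : ℕ) : DihedralGroup p × DihedralGroup p →* MulAut (Multiplicative (ZMod q)) :=
  (unitsIntAut (Multiplicative (ZMod q))).comp
    (((dihedralSign p).comp (MonoidHom.fst _ _)) * ((dihedralSign p).comp (MonoidHom.snd _ _)))

/-- The group `W = C_q ⋊ (D_p × D_p)`. -/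
abbrev Wgrp (p q : ℕ) : Type :=
  SemidirectProduct (Multiplicative (ZMod q)) (DihedralGroup p × DihedralGroup p) (Wact p q)

/-- The quotient map `λ : W → D_p × D_p`. -/
abbrev lamW (p q : ℕ) : Wgrp p q →* DihedralGroup p × DihedralGroup p :=
  SemidirectProduct.rightHom

/-- The group `G_Γ ≤ D_p^V × W^R` associated to a graph `Γ = (V, R)`. -/
def GGamma (p q : ℕ) (V : Type*) (R : Set (V × V)) :
    Subgroup ((V → DihedralGroup p) × (R → Wgrp p q)) where
  carrier := {x | ∀ r : R,
    SemidirectProduct.rightHom (x.2 r) = (x.1 (r : V × V).1, x.1 (r : V × V).2)}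
  one_mem' := by intro r; simp <;> rfl
  mul_mem' := by
    intro a b ha hb r
    simp only [Set.mem_setOf_eq] at ha hb
    simp only [Prod.snd_mul, Pi.mul_apply, map_mul, Prod.fst_mul, ha r, hb r, Prod.mk_mul_mk]
  inv_mem' := by
    intro a ha r
    simp only [Set.mem_setOf_eq] at ha
    simp only [Prod.snd_inv, Pi.inv_apply, map_inv, Prod.fst_inv, ha r, Prod.inv_mk]

instance (n : ℕ) : TopologicalSpace (DihedralGroup n) := ⊥
instance (n : ℕ) : DiscreteTopology (DihedralGroup n) := ⟨rfl⟩
instance (p q : ℕ) : TopologicalSpace (Wgrp p q) := ⊥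
instance (p q : ℕ) : DiscreteTopology (Wgrp p q) := ⟨rfl⟩

variable (p q : ℕ) (V : Type*) (R : Set (V × V))

/-- The coordinate projection `π_v : G_Γ → D_p` at a vertex `v`. -/
def vProj (v : V) : ↥(GGamma p q V R) →* DihedralGroup p :=
  (Pi.evalMonoidHom (fun _ : V => DihedralGroup p) v).comp
    ((MonoidHom.fst _ _).comp (GGamma p q V R).subtype)

/-- The coordinate projection `π_r : G_Γ → W` at an edge `r`. -/
def eProj (r : R) : ↥(GGamma p q V R) →* Wgrp p q :=
  (Pi.evalMonoidHom (fun _ : R => Wgrp p q) r).comp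
    ((MonoidHom.snd _ _).comp (GGamma p q V R).subtype)

variable (I : Type*)

/-- The coordinate projection `π_v : G_Γ × C_2^I → D_p` at a vertex `v`. -/
def vProjK (v : V) : (↥(GGamma p q V R) × (I → ℤˣ)) →* DihedralGroup p :=
  (vProj p q V R v).comp (MonoidHom.fst _ _)

/-- The coordinate projection `π_r : G_Γ × C_2^I → W` at an edge `r`. -/
def eProjK (r : R) : (↥(GGamma p q V R) × (I → ℤˣ)) →* Wgrp p q :=
  (eProj p q V R r).comp (MonoidHom.fst _ _)

/-- The map `ξ_Γ : G_Γ → C_2^V`, `((a_v), (b_r)) ↦ (τ(a_v))_v`. -/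
def xiGamma : ↥(GGamma p q V R) →* (V → ℤˣ) :=
  Pi.monoidHom fun v => (dihedralSign p).comp (vProj p q V R v)

end
noncomputable section
variable (p q : ℕ) (V : Type*) (R : Set (V × V))

/-- The edge set of the induced subgraph on a set `V₀` of vertices. -/
def inducedR (V0 : Set V) : Set (↥V0 × ↥V0) := {e | ((e.1 : V), (e.2 : V)) ∈ R}

/-- The coordinate projection `π_{Γ₀} : G_Γ → G_{Γ₀}` onto the group of an induced
subgraph. -/
def projGGamma (V0 : Set V) :
    ↥(GGamma p q V R) →* ↥(GGamma p q ↥V0 (inducedR V R V0)) :=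
  MonoidHom.codRestrict
    ((MonoidHom.prod
      ((Pi.monoidHom fun v : ↥V0 =>
        Pi.evalMonoidHom (fun _ : V => DihedralGroup p) (v : V)).comp (MonoidHom.fst _ _))
      ((Pi.monoidHom fun e : inducedR V R V0 =>
        Pi.evalMonoidHom (fun _ : R => Wgrp p q)
          (⟨(((e : ↥V0 × ↥V0).1 : V), ((e : ↥V0 × ↥V0).2 : V)), e.2⟩ : R)).comp
        (MonoidHom.snd _ _))).comp (GGamma p q V R).subtype)
    (GGamma p q ↥V0 (inducedR V R V0))
    (fun x => by
      intro e
      exact x.2 ⟨(((e : ↥V0 × ↥V0).1 : V), ((e : ↥V0 × ↥V0).2 : V)), e.2⟩)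
end
noncomputable section
variable (p q : ℕ) (V : Type*) (R : Set (V × V))

/-- The edge component of the embedding `g ↦ (g)_v`. -/
def vertEmbW [DecidableEq V] (v : V) (r : V × V) : DihedralGroup p →* Wgrp p q :=
  SemidirectProduct.inr.comp
    (MonoidHom.prod (if r.1 = v then MonoidHom.id _ else 1) (if r.2 = v then MonoidHom.id _ else 1))

/-- The embedding `g ↦ (g)_v : D_p → G_Γ` associated to a vertex `v`. -/
def vertEmb [DecidableEq V] (v : V) : DihedralGroup p →* ↥(GGamma p q V R) :=
  MonoidHom.codRestrict
    (MonoidHom.prod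
      (Pi.monoidHom fun w : V => if w = v then MonoidHom.id (DihedralGroup p) else 1)
      (Pi.monoidHom fun r : R => vertEmbW p q V v (r : V × V)))
    (GGamma p q V R)
    (fun g => by
      intro r
      by_cases h1 : (r : V × V).1 = v <;> by_cases h2 : (r : V × V).2 = v <;>
        simp [vertEmbW, h1, h2, Pi.monoidHom]
      )

/-- The embedding `g ↦ (g)_v : D_p → G_Γ × C_2^I`. -/
def vertEmbK (I : Type*) [DecidableEq V] (v : V) :
    DihedralGroup p →* (↥(GGamma p q V R) × (I → ℤˣ)) :=
  MonoidHom.prod (vertEmb p q V R v) 1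

/-- The embedding `C_q → G_Γ` associated to an edge `r`. -/
def edgeEmb [DecidableEq V] (r : R) : Multiplicative (ZMod q) →* ↥(GGamma p q V R) :=
  MonoidHom.codRestrict
    (MonoidHom.prod (1 : Multiplicative (ZMod q) →* (V → DihedralGroup p))
      (Pi.monoidHom fun r' : R => if r' = r then SemidirectProduct.inl else 1))
    (GGamma p q V R)
    (fun a => by
      intro r'
      by_cases h : r' = r <;> simp [h, Pi.monoidHom] <;> rfl)

/-- The embedding `C_q → G_Γ × C_2^I` associated to an edge `r`. -/
def edgeEmbK (I : Type*) [DecidableEq V] (r : R) :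
    Multiplicative (ZMod q) →* (↥(GGamma p q V R) × (I → ℤˣ)) :=
  MonoidHom.prod (edgeEmb p q V R r) 1

/-- The embedding `C_q^R → G_Γ × C_2^I` of the product of all edge `C_q`'s. -/
def cqREmbK (I : Type*) : (R → Multiplicative (ZMod q)) →* (↥(GGamma p q V R) × (I → ℤˣ)) :=
  MonoidHom.prod
    (MonoidHom.codRestrict
      (MonoidHom.prod (1 : (R → Multiplicative (ZMod q)) →* (V → DihedralGroup p))
        (Pi.monoidHom fun r : R =>
          SemidirectProduct.inl.comp (Pi.evalMonoidHom (fun _ : R => Multiplicative (ZMod q)) r)))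
      (GGamma p q V R)
      (fun a => by intro r; simp [Pi.monoidHom] <;> rfl))
    1
end

/-! Raising an element of `N` whose `π_r`-coordinate is `b ∈ C_q` to the power `2p` kills its
vertex coordinates and its `C_2^I` coordinate, leaving an element of `∏_R C_q` with `r`-coordinate
`b^(2p)`. Multiplying such an element by its inverse conjugated by the reflection `(β)_v` squares
the coordinates at the edges with exactly one end at `v` and kills the others; doing this for both
ends of `r` leaves `(b^(2p))^4` at `r` alone, because `Γ` has neither loops nor 2-cycles. As `8p`
is prime to `q`, every element of `C_q` is an `8p`-th power. -/

section EdgeGroups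

variable {p q : ℕ} {V I : Type*} {R : Set (V × V)}

theorem GGammaK_ext {x y : ↥(GGamma p q V R) × (I → ℤˣ)}
    (hv : ∀ w, vProjK p q V R I w x = vProjK p q V R I w y)
    (he : ∀ r : R, eProjK p q V R I r x = eProjK p q V R I r y) (hI : x.2 = y.2) : x = y := by
  obtain ⟨⟨⟨x1, x2⟩, hx⟩, x3⟩ := x
  obtain ⟨⟨⟨y1, y2⟩, hy⟩, y3⟩ := y
  simp only [Prod.mk.injEq, Subtype.mk.injEq]
  exact ⟨⟨funext hv, funext he⟩, hI⟩

@[simp]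
theorem vProjK_cqREmbK (f : R → Multiplicative (ZMod q)) (w : V) :
    vProjK p q V R I w (cqREmbK p q V R I f) = 1 := rfl

@[simp]
theorem eProjK_cqREmbK (f : R → Multiplicative (ZMod q)) (r : R) :
    eProjK p q V R I r (cqREmbK p q V R I f) = SemidirectProduct.inl (f r) := rfl

@[simp]
theorem cqREmbK_snd (f : R → Multiplicative (ZMod q)) : (cqREmbK p q V R I f).2 = 1 := rfl

theorem pow_two_mul_eq_cqREmbK (x : ↥(GGamma p q V R) × (I → ℤˣ)) :
    x ^ (2 * p) = cqREmbK p q V R I (fun r => (eProjK p q V R I r x ^ (2 * p)).left) := by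
  have hD : ∀ g : DihedralGroup p, g ^ (2 * p) = 1 := fun g => by
    rw [← DihedralGroup.nat_card, pow_card_eq_one']
  refine GGammaK_ext (fun w => by simp [hD]) (fun r => ?_) ?_
  · have hright : (eProjK p q V R I r x ^ (2 * p)).right = 1 := by
      rw [← SemidirectProduct.rightHom_eq_right, map_pow]
      exact Prod.ext (by simp [hD]) (by simp [hD])
    rw [eProjK_cqREmbK, map_pow, ← SemidirectProduct.inl_left_mul_inr_right (_ ^ (2 * p)),
      hright, map_one, mul_one, SemidirectProduct.left_inl]
  · funext i
    simp [pow_mul, Int.units_sq]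

theorem xor_eq_and_xor_eq_iff {a b v v' : V} (hvv' : v ≠ v') (hrev : (a, b) ≠ (v', v)) :
    Xor (a = v) (b = v) ∧ Xor (a = v') (b = v') ↔ (a, b) = (v, v') := by
  constructor
  · rintro ⟨h, h'⟩
    simp only [Xor, Prod.mk.injEq, ne_eq] at *
    grind
  · rintro ⟨⟩
    simp [Xor, hvv', hvv'.symm]

variable [DecidableEq V]

@[simp]
theorem vProjK_vertEmbK (g : DihedralGroup p) (v w : V) :
    vProjK p q V R I w (vertEmbK p q V R I v g) = if w = v then g else 1 := by
  change (if w = v then MonoidHom.id (DihedralGroup p) else 1) g = _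
  split_ifs <;> rfl

@[simp]
theorem eProjK_vertEmbK (g : DihedralGroup p) (v : V) (r : R) :
    eProjK p q V R I r (vertEmbK p q V R I v g) =
      SemidirectProduct.inr (if (r : V × V).1 = v then g else 1,
        if (r : V × V).2 = v then g else 1) := by
  change SemidirectProduct.inr
      ((if (r : V × V).1 = v then MonoidHom.id (DihedralGroup p) else 1) g,
       (if (r : V × V).2 = v then MonoidHom.id (DihedralGroup p) else 1) g) = _
  split_ifs <;> rfl

@[simp]
theorem vertEmbK_snd (g : DihedralGroup p) (v : V) : (vertEmbK p q V R I v g).2 = 1 := rfl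

theorem edgeEmbK_eq_cqREmbK_mulSingle (r : R) (a : Multiplicative (ZMod q)) :
    edgeEmbK p q V R I r a = cqREmbK p q V R I (Pi.mulSingle r a) := by
  refine GGammaK_ext (fun _ => rfl) (fun r' => ?_) rfl
  change (if r' = r then (SemidirectProduct.inl :
      Multiplicative (ZMod q) →* Wgrp p q) else 1) a = _
  rw [eProjK_cqREmbK, Pi.mulSingle_apply]
  split_ifs <;> simp

theorem Wact_reflection_pair (a b : Prop) [Decidable a] [Decidable b]
    (c : Multiplicative (ZMod q)) :
    Wact p q (if a then DihedralGroup.sr 0 else 1, if b then DihedralGroup.sr 0 else 1) c =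
      if Xor a b then c⁻¹ else c := by
  have hsign : ∀ (x : Prop) [Decidable x],
      dihedralSign p (if x then DihedralGroup.sr 0 else 1) = if x then -1 else 1 := by
    intro x _
    split_ifs <;> rfl
  change c ^ (((dihedralSign p (if a then DihedralGroup.sr 0 else 1) *
    dihedralSign p (if b then DihedralGroup.sr 0 else 1) : ℤˣ) : ℤ)) = _
  rw [hsign a, hsign b]
  by_cases ha : a <;> by_cases hb : b <;> simp [ha, hb, Xor]

theorem cqREmbK_mul_conj_inv (v : V) (f : R → Multiplicative (ZMod q)) :
    cqREmbK p q V R I f * (vertEmbK p q V R I v (DihedralGroup.sr 0) * (cqREmbK p q V R I f)⁻¹ *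
      (vertEmbK p q V R I v (DihedralGroup.sr 0))⁻¹) =
    cqREmbK p q V R I
      (fun r => if Xor ((r : V × V).1 = v) ((r : V × V).2 = v) then f r ^ 2 else 1) := by
  refine GGammaK_ext (fun w => by simp) (fun r => ?_) (by simp)
  simp only [map_mul, map_inv, eProjK_vertEmbK, eProjK_cqREmbK]
  rw [← map_inv SemidirectProduct.inr, ← map_inv SemidirectProduct.inl, ← SemidirectProduct.inl_aut,
    ← map_mul, Wact_reflection_pair]
  split_ifs <;> simp [pow_two]

variable (N : Subgroup (↥(GGamma p q V R) × (I → ℤˣ))) [N.Normal]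

theorem cqREmbK_mulSingle_pow_four_mem (hloop : ∀ v : V, (v, v) ∉ R)
    (hor : ∀ a b : V, (a, b) ∈ R → (b, a) ∉ R) (r : R) {f : R → Multiplicative (ZMod q)}
    (hf : cqREmbK p q V R I f ∈ N) : cqREmbK p q V R I (Pi.mulSingle r (f r ^ 4)) ∈ N := by
  have conj_mem : ∀ (v : V) {g : R → Multiplicative (ZMod q)}, cqREmbK p q V R I g ∈ N →
      cqREmbK p q V R I
        (fun r => if Xor ((r : V × V).1 = v) ((r : V × V).2 = v) then g r ^ 2 else 1) ∈ N :=
    fun v g hg => cqREmbK_mul_conj_inv v g ▸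
      N.mul_mem hg (Subgroup.Normal.conj_mem inferInstance _ (N.inv_mem hg) _)
  convert conj_mem (r : V × V).2 (conj_mem (r : V × V).1 hf) using 2
  funext r'
  have hvv' : (r : V × V).1 ≠ (r : V × V).2 := by
    intro h
    have hr : ((r : V × V).1, (r : V × V).2) ∈ R := r.2
    exact hloop _ (h ▸ hr)
  have hrev : ((r' : V × V).1, (r' : V × V).2) ≠ ((r : V × V).2, (r : V × V).1) :=
    fun h => hor _ _ r.2 (h ▸ r'.2)
  have hiff := xor_eq_and_xor_eq_iff hvv' hrev
  rw [Pi.mulSingle_apply]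
  by_cases hr : r' = r
  · subst hr
    obtain ⟨h1, h2⟩ := hiff.2 rfl
    rw [if_pos rfl, if_pos h2, if_pos h1, ← pow_mul]
  · have hnot : ¬ (Xor ((r' : V × V).1 = (r : V × V).1) ((r' : V × V).2 = (r : V × V).1) ∧
        Xor ((r' : V × V).1 = (r : V × V).2) ((r' : V × V).2 = (r : V × V).2)) :=
      fun h => hr (Subtype.ext (hiff.1 h))
    rw [if_neg hr]
    split_ifs with h2 h1
    · exact absurd ⟨h1, h2⟩ hnot
    · rw [one_pow]
    · rfl

theorem edgeEmbK_pow_mem (hloop : ∀ v : V, (v, v) ∉ R) (hor : ∀ a b : V, (a, b) ∈ R → (b, a) ∉ R)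
    (r : R) {n : ↥(GGamma p q V R) × (I → ℤˣ)} (hn : n ∈ N) {b : Multiplicative (ZMod q)}
    (hb : eProjK p q V R I r n = SemidirectProduct.inl b) :
    edgeEmbK p q V R I r (b ^ (2 ^ 3 * p)) ∈ N := by
  have hpow := N.pow_mem hn (2 * p)
  rw [pow_two_mul_eq_cqREmbK] at hpow
  have hmem := cqREmbK_mulSingle_pow_four_mem N hloop hor r hpow
  rwa [hb, ← map_pow, SemidirectProduct.left_inl, ← pow_mul,
    ← edgeEmbK_eq_cqREmbK_mulSingle, show 2 * p * 4 = 2 ^ 3 * p by ring] at hmem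

end EdgeGroups

theorem statement_8_general (p q : ℕ) (hp : p.Prime) (hq : q.Prime) (hqo : Odd q)
    (hpq : p ≠ q) (V I : Type) [DecidableEq V] (R : Set (V × V))
    (hloop : ∀ v : V, (v, v) ∉ R) (hor : ∀ a b : V, (a, b) ∈ R → (b, a) ∉ R)
    (N : Subgroup (↥(GGamma p q V R) × (I → ℤˣ))) [N.Normal] (r : R)
    (h : (SemidirectProduct.inl : Multiplicative (ZMod q) →* Wgrp p q).range ≤
      N.map (eProjK p q V R I r)) :
    (edgeEmbK p q V R I r).range ≤ N := by
  rintro _ ⟨a, rfl⟩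
  have hq2 : q ≠ 2 := by
    rintro rfl
    exact absurd hqo (by decide)
  have hcop : (Nat.card (Multiplicative (ZMod q))).Coprime (2 ^ 3 * p) := by
    rw [show Nat.card (Multiplicative (ZMod q)) = q from Nat.card_zmod q]
    exact Nat.Coprime.mul_right (((Nat.coprime_primes hq Nat.prime_two).2 hq2).pow_right 3)
      ((Nat.coprime_primes hq hp).2 hpq.symm)
  obtain ⟨b, rfl⟩ := (powCoprime hcop).surjective a
  obtain ⟨n, hn, hnb⟩ := Subgroup.mem_map.1 (h ⟨b, rfl⟩)
  exact edgeEmbK_pow_mem N hloop hor r hn hnb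

/-- Let `Γ = (V, R)` be a graph, `I` a set, and `N` an open normal subgroup
of `G_Γ × C_2^I`.  If `C_q ⊆ π_r(N)` for some edge `r` (with `C_q` viewed inside `W` as the
elements `(a,1,1)`), then `(C_q)_r ⊆ N`, where `(C_q)_r` is the image of `C_q` under the
embedding `g ↦ (g)_r`. -/
theorem statement_8 (p q : ℕ) (hp : p.Prime) (hq : q.Prime) (hpo : Odd p) (hqo : Odd q)
    (hpq : p ≠ q) (V I : Type) [DecidableEq V] (R : Set (V × V))
    (hloop : ∀ v : V, (v, v) ∉ R) (hor : ∀ a b : V, (a, b) ∈ R → (b, a) ∉ R)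
    (N : Subgroup (↥(GGamma p q V R) × (I → ℤˣ))) [N.Normal]
    (hNo : IsOpen (N : Set (↥(GGamma p q V R) × (I → ℤˣ)))) (r : R)
    (h : (SemidirectProduct.inl : Multiplicative (ZMod q) →* Wgrp p q).range ≤
      N.map (eProjK p q V R I r)) :
    (edgeEmbK p q V R I r).range ≤ N :=
  statement_8_general p q hp hq hqo hpq V I R hloop hor N r h
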